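/- arXiv:1003.2889 — 3 statements merged into one kernel-verified Lean document; each statement's English description precedes it below -/
import Mathlib

section
/- Fix an integer n ≥ 1 and integers b_1, …, b_n and c_1, …, c_n. Let P ⊆ ℝ^n × ℝ^n be the polyhedron of pairs (y, ε) with y_k ≥ 0 and ε_k ≥ 0 for all k, satisfying the prefix constraints Σ_{k=1}^{t} (y_k + ε_k) ≥ b_t for t = 1, …, n−1, the equality Σ_{k=1}^{n} (y_k + ε_k) = b_n, the prefix constraints Σ_{k=1}^{t} y_k ≥ c_t for t = 1, …, n−1, and the equality Σ_{k=1}^{n} y_k = c_n. Then every extreme point of P has all coordinates in ℤ. -/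
/-!
Write `Y t`, `E t` for the prefix sums of `y` and `ε`, and `χ` for the indicator of the
non-integers. Perturb `y` and `ε` by `s` and `-s` times the difference sequences of `χ ∘ Y` and
`χ ∘ E`, so that every `Y t` moves by `s χ(Y t)` and every `E t` by `-s χ(E t)`. For small `|s|`
this stays inside the polyhedron: all right-hand sides are integers, so a constraint whose value
moves is evaluated at a non-integer and hence has slack, and a coordinate `y k = 0` gives
`Y (k + 1) = Y k`, so it does not move. At an extreme point the perturbation must vanish, so every
prefix sum, and hence every coordinate, is an integer. Only the additive group structure of
`ℤ ⊆ ℝ` is used, so the argument is run for an arbitrary additive subgroup `G` of `ℝ`.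
-/

open Finset Filter Topology

theorem eq_zero_of_add_mem_of_sub_mem_of_mem_extremePoints {𝕜 E : Type*} [Field 𝕜] [LinearOrder 𝕜]
    [IsStrictOrderedRing 𝕜] [AddCommGroup E] [Module 𝕜 E] {A : Set E} {x v : E}
    (hx : x ∈ A.extremePoints 𝕜) (hadd : x + v ∈ A) (hsub : x - v ∈ A) : v = 0 := by
  have : Invertible (2 : 𝕜) := invertibleOfNonzero two_ne_zero
  have hmid : x ∈ openSegment 𝕜 (x + v) (x - v) := by
    simpa only [midpoint_add_sub] using midpoint_mem_openSegment (𝕜 := 𝕜) (x + v) (x - v)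
  simpa using ((mem_extremePoints.1 hx).2 _ hadd _ hsub hmid).1

theorem eventually_forall_le_of_pos {ι : Type*} [Finite ι] (f : ι → ℝ) :
    ∀ᶠ δ in 𝓝[>] 0, ∀ i, 0 < f i → δ ≤ f i := by
  refine eventually_all.2 fun i => ?_
  by_cases hi : 0 < f i
  · filter_upwards [Ioo_mem_nhdsGT hi] with δ hδ _ using hδ.2.le
  · exact .of_forall fun _ h => absurd h hi

theorem le_add_mul_of_slack {a x s w δ : ℝ} (hax : a ≤ x) (hs : |s| ≤ δ) (hw : |w| ≤ 1)
    (hslack : w ≠ 0 → δ ≤ x - a) : a ≤ x + s * w := by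
  rcases eq_or_ne w 0 with rfl | hw0
  · simpa using hax
  · have hsw : |s * w| ≤ δ := calc
      |s * w| = |s| * |w| := abs_mul s w
      _ ≤ δ * 1 := mul_le_mul hs hw (abs_nonneg w) ((abs_nonneg s).trans hs)
      _ = δ := mul_one δ
    linarith [neg_abs_le (s * w), hslack hw0]

noncomputable def nonMemIndicator (G : AddSubgroup ℝ) : ℝ → ℝ := (G : Set ℝ)ᶜ.indicator 1

section NonMemIndicator

variable {G : AddSubgroup ℝ} {x y : ℝ}

theorem nonMemIndicator_eq_zero_iff : nonMemIndicator G x = 0 ↔ x ∈ G := by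
  simp [nonMemIndicator, Set.indicator_apply_eq_zero]

theorem nonMemIndicator_of_mem (hx : x ∈ G) : nonMemIndicator G x = 0 :=
  nonMemIndicator_eq_zero_iff.2 hx

theorem nonMemIndicator_of_notMem (hx : x ∉ G) : nonMemIndicator G x = 1 :=
  Set.indicator_of_mem hx 1

theorem abs_nonMemIndicator_le_one : |nonMemIndicator G x| ≤ 1 := by
  unfold nonMemIndicator Set.indicator
  split_ifs <;> norm_num

theorem abs_nonMemIndicator_sub_le_one : |nonMemIndicator G x - nonMemIndicator G y| ≤ 1 := by
  unfold nonMemIndicator Set.indicator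
  split_ifs <;> norm_num

theorem add_notMem_of_nonMemIndicator_ne (h : nonMemIndicator G x ≠ nonMemIndicator G y) :
    x + y ∉ G := by
  intro hxy
  have hiff : x ∈ G ↔ y ∈ G :=
    ⟨fun hx => (G.add_mem_cancel_left hx).1 hxy, fun hy => (G.add_mem_cancel_right hy).1 hxy⟩
  by_cases hx : x ∈ G
  · exact h (by rw [nonMemIndicator_of_mem hx, nonMemIndicator_of_mem (hiff.1 hx)])
  · exact h (by rw [nonMemIndicator_of_notMem hx, nonMemIndicator_of_notMem (hiff.not.1 hx)])

theorem le_add_mul_of_mem_of_slack {a x s w δ : ℝ} (ha : a ∈ G) (hax : a ≤ x) (hs : |s| ≤ δ)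
    (hw : |w| ≤ 1) (hδ : 0 < x - a → δ ≤ x - a) (hwx : w ≠ 0 → x ∉ G) : a ≤ x + s * w :=
  le_add_mul_of_slack hax hs hw fun h =>
    hδ (sub_pos.2 (hax.lt_of_ne (ne_of_mem_of_not_mem ha (hwx h))))

end NonMemIndicator

theorem Fin.sum_Iic_eq_partialSum_succ {M : Type*} [AddCommGroup M] {n : ℕ} (f : Fin n → M)
    (t : Fin n) : ∑ k ∈ Iic t, f k = Fin.partialSum f t.succ := by
  simpa [Fin.partialSum_succ] using Fin.sum_Iic_sub t (Fin.partialSum f)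

theorem Fin.sum_eq_partialSum_last {M : Type*} [AddCommMonoid M] {n : ℕ} (f : Fin n → M) :
    ∑ k, f k = Fin.partialSum f (Fin.last n) := by
  simp [Fin.partialSum, List.take_of_length_le, List.sum_ofFn]

noncomputable def prefixShift (G : AddSubgroup ℝ) {n : ℕ} (x : Fin n → ℝ) (k : Fin n) : ℝ :=
  nonMemIndicator G (Fin.partialSum x k.succ) - nonMemIndicator G (Fin.partialSum x k.castSucc)

section PrefixShift

variable {G : AddSubgroup ℝ} {n : ℕ} (x : Fin n → ℝ)

theorem partialSum_prefixShift :
    Fin.partialSum (prefixShift G x) = nonMemIndicator G ∘ Fin.partialSum x := by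
  funext i
  induction i using Fin.inductionOn with
  | zero => simp [nonMemIndicator_of_mem G.zero_mem]
  | succ k ih => simp [Fin.partialSum_succ, ih, prefixShift]

theorem sum_Iic_add_mul_prefixShift (s : ℝ) (t : Fin n) :
    ∑ k ∈ Iic t, (x k + s * prefixShift G x k)
      = ∑ k ∈ Iic t, x k + s * nonMemIndicator G (∑ k ∈ Iic t, x k) := by
  simp only [sum_add_distrib, ← mul_sum, Fin.sum_Iic_eq_partialSum_succ, partialSum_prefixShift,
    Function.comp_apply]

theorem sum_add_mul_prefixShift (s : ℝ) :
    ∑ k, (x k + s * prefixShift G x k) = ∑ k, x k + s * nonMemIndicator G (∑ k, x k) := by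
  simp only [sum_add_distrib, ← mul_sum, Fin.sum_eq_partialSum_last, partialSum_prefixShift,
    Function.comp_apply]

theorem abs_prefixShift_le_one (k : Fin n) : |prefixShift G x k| ≤ 1 :=
  abs_nonMemIndicator_sub_le_one

variable {x}

theorem prefixShift_eq_zero_of_eq_zero {k : Fin n} (hk : x k = 0) : prefixShift G x k = 0 := by
  simp [prefixShift, Fin.partialSum_succ, hk]

theorem nonneg_add_mul_prefixShift {k : Fin n} {s δ : ℝ} (hk : 0 ≤ x k) (hs : |s| ≤ δ)
    (hδ : 0 < x k → δ ≤ x k) : 0 ≤ x k + s * prefixShift G x k := by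
  simpa using le_add_mul_of_slack hk hs (abs_prefixShift_le_one x k) fun hw => by
    simpa using hδ (hk.lt_of_ne' (mt prefixShift_eq_zero_of_eq_zero hw))

theorem mem_of_prefixShift_eq_zero (h : prefixShift G x = 0) (k : Fin n) : x k ∈ G := by
  have hmem : ∀ i, Fin.partialSum x i ∈ G := fun i =>
    nonMemIndicator_eq_zero_iff.1 <| by
      simpa [h, Pi.zero_def, Fin.partialSum] using
        (congrFun (partialSum_prefixShift (G := G) x) i).symm
  simpa [Fin.partialSum_succ] using G.sub_mem (hmem k.succ) (hmem k.castSucc)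

end PrefixShift

def regenerationPolyhedron (n : ℕ) (hn : 0 < n) (b c : Fin n → ℝ) :
    Set ((Fin n → ℝ) × (Fin n → ℝ)) :=
  {p | (∀ k, 0 ≤ p.1 k) ∧ (∀ k, 0 ≤ p.2 k) ∧
    (∀ t : Fin n, (t : ℕ) + 1 < n → b t ≤ ∑ k ∈ Iic t, (p.1 k + p.2 k)) ∧
    ∑ k, (p.1 k + p.2 k) = b ⟨n - 1, by omega⟩ ∧
    (∀ t : Fin n, (t : ℕ) + 1 < n → c t ≤ ∑ k ∈ Iic t, p.1 k) ∧
    ∑ k, p.1 k = c ⟨n - 1, by omega⟩}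

section RegenerationPolyhedron

variable {G : AddSubgroup ℝ} {n : ℕ} {hn : 0 < n} {b c : Fin n → ℝ}
  {p : (Fin n → ℝ) × (Fin n → ℝ)}

theorem eventually_add_smul_prefixShift_mem (hb : ∀ t, b t ∈ G) (hc : ∀ t, c t ∈ G)
    (hp : p ∈ regenerationPolyhedron n hn b c) :
    ∀ᶠ δ in 𝓝[>] 0, ∀ s : ℝ, |s| ≤ δ →
      p + s • (prefixShift G p.1, -prefixShift G p.2) ∈ regenerationPolyhedron n hn b c := by
  obtain ⟨hy, hε, hbt, hbn, hct, hcn⟩ := hp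
  filter_upwards [eventually_forall_le_of_pos p.1, eventually_forall_le_of_pos p.2,
    eventually_forall_le_of_pos fun t => ∑ k ∈ Iic t, (p.1 k + p.2 k) - b t,
    eventually_forall_le_of_pos fun t => ∑ k ∈ Iic t, p.1 k - c t] with δ hδy hδε hδb hδc s hs
  have hfst (k) : (p + s • (prefixShift G p.1, -prefixShift G p.2)).1 k
      = p.1 k + s * prefixShift G p.1 k := rfl
  have hsnd (k) : (p + s • (prefixShift G p.1, -prefixShift G p.2)).2 k
      = p.2 k + -s * prefixShift G p.2 k := by simp
  simp only [regenerationPolyhedron, Set.mem_ofPred_eq, hfst, hsnd]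
  refine ⟨fun k => ?_, fun k => ?_, fun t ht => ?_, ?_, fun t ht => ?_, ?_⟩
  · exact nonneg_add_mul_prefixShift (hy k) hs (hδy k)
  · exact nonneg_add_mul_prefixShift (hε k) ((abs_neg s).trans_le hs) (hδε k)
  · have hslack := le_add_mul_of_mem_of_slack (hb t) (hbt t ht) hs
      abs_nonMemIndicator_sub_le_one (hδb t) fun hw => by
        rw [sum_add_distrib]
        exact add_notMem_of_nonMemIndicator_ne (sub_ne_zero.1 hw)
    rw [sum_add_distrib, sum_Iic_add_mul_prefixShift, sum_Iic_add_mul_prefixShift]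
    rw [sum_add_distrib] at hslack
    linarith
  · have hY : ∑ k, p.1 k ∈ G := hcn ▸ hc _
    have hE : ∑ k, p.2 k ∈ G := by
      have h := G.sub_mem (hb ⟨n - 1, by omega⟩) (hc ⟨n - 1, by omega⟩)
      rwa [← hbn, ← hcn, sum_add_distrib, add_sub_cancel_left] at h
    rw [sum_add_distrib, sum_add_mul_prefixShift, sum_add_mul_prefixShift,
      nonMemIndicator_of_mem hY, nonMemIndicator_of_mem hE, ← hbn, sum_add_distrib]
    ring
  · rw [sum_Iic_add_mul_prefixShift]
    exact le_add_mul_of_mem_of_slack (hc t) (hct t ht) hs abs_nonMemIndicator_le_one (hδc t)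
      (mt nonMemIndicator_of_mem)
  · rw [sum_add_mul_prefixShift, nonMemIndicator_of_mem (hcn ▸ hc _), hcn]
    ring

theorem mem_of_mem_extremePoints_regenerationPolyhedron (hb : ∀ t, b t ∈ G)
    (hc : ∀ t, c t ∈ G) (hp : p ∈ (regenerationPolyhedron n hn b c).extremePoints ℝ) :
    (∀ k, p.1 k ∈ G) ∧ ∀ k, p.2 k ∈ G := by
  obtain ⟨δ, hmem, hδ⟩ :=
    ((eventually_add_smul_prefixShift_mem hb hc hp.1).and self_mem_nhdsWithin).exists
  have hzero := eq_zero_of_add_mem_of_sub_mem_of_mem_extremePoints hp (hmem δ (abs_of_pos hδ).le)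
    (by simpa [sub_eq_add_neg] using hmem (-δ) (by simp [abs_of_pos hδ]))
  obtain ⟨h₁, h₂⟩ := Prod.ext_iff.1 (smul_eq_zero.1 hzero |>.resolve_left hδ.ne')
  exact ⟨mem_of_prefixShift_eq_zero h₁, mem_of_prefixShift_eq_zero (neg_eq_zero.1 h₂)⟩

end RegenerationPolyhedron

/-- The feasible polyhedron of the regeneration-interval linear
program (LP_i^{αβ}) (periods relabelled 1,…,n) has only integral extreme
points. -/
theorem lp_regeneration_interval_extreme_points_integral
    (n : ℕ) (hn : 1 ≤ n) (b c : Fin n → ℤ)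
    (P : Set ((Fin n → ℝ) × (Fin n → ℝ)))
    (hP : P = {p | (∀ k, 0 ≤ p.1 k) ∧ (∀ k, 0 ≤ p.2 k) ∧
      (∀ t : Fin n, (t : ℕ) + 1 < n →
        (b t : ℝ) ≤ ∑ k ∈ Finset.Iic t, (p.1 k + p.2 k)) ∧
      (∑ k, (p.1 k + p.2 k)) = (b ⟨n - 1, by omega⟩ : ℝ) ∧
      (∀ t : Fin n, (t : ℕ) + 1 < n →
        (c t : ℝ) ≤ ∑ k ∈ Finset.Iic t, p.1 k) ∧
      (∑ k, p.1 k) = (c ⟨n - 1, by omega⟩ : ℝ)}) :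
    ∀ p ∈ Set.extremePoints ℝ P,
      (∀ k, ∃ z : ℤ, p.1 k = z) ∧ (∀ k, ∃ z : ℤ, p.2 k = z) := by
  subst hP
  intro p hp
  have hint : ∀ x : ℝ, x ∈ (Int.castAddHom ℝ).range ↔ ∃ z : ℤ, x = z := fun x => by
    rw [AddMonoidHom.mem_range]
    exact exists_congr fun z => eq_comm
  simpa only [hint] using mem_of_mem_extremePoints_regenerationPolyhedron (hn := hn)
    (b := fun t => b t) (c := fun t => c t) (fun t => (hint _).2 ⟨b t, rfl⟩)
    (fun t => (hint _).2 ⟨c t, rfl⟩) hp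
end

section
/- Let C > 0, let α ≤ β be integers, let d : {α,…,β} → ℝ, and let x : {α−1,…,β} → ℝ, u, y : {α,…,β} → ℝ satisfy x(α−1) = 0, x(k) = x(k−1) − d(k) + u(k) for all k ∈ {α,…,β}, x(k) ≥ 0 for all k, 0 ≤ u(k) ≤ C y(k), and y(k) ∈ {0,1} for all k. Then for every t ∈ {α,…,β}, Σ_{k=α}^{t} y(k) ≥ ⌈ (Σ_{k=α}^{t} d(k)) / C ⌉. -/
/-!
Telescoping the inventory balance gives `x t = ∑_{k=α}^{t} (u k - d k)`, so nonnegativity of the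
stock at `t` says that production covers the accumulated demand. Production is at most `C` per
setup, hence `d^{αt} / C ≤ ∑_{k=α}^{t} y k`, and the right side is an integer because `y` is
binary, so it also dominates the ceiling.
-/

open Finset

theorem Int.eq_add_sum_Icc_of_forall_eq_add {M : Type*} [AddCommMonoid M] {x f : ℤ → M}
    {α t : ℤ} (hαt : α - 1 ≤ t) (h : ∀ k ∈ Icc α t, x k = x (k - 1) + f k) :
    x t = x (α - 1) + ∑ k ∈ Icc α t, f k := by
  induction t, hαt using Int.leInduction with
  | base => simp
  | succ t hαt ih =>
    rw [← insert_Icc_right_eq_Icc_add_one (by omega), sum_insert (by simp),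
      h (t + 1) (mem_Icc.mpr (by omega)), add_sub_cancel_right,
      ih fun k hk => h k (Icc_subset_Icc_right (by omega) hk), add_assoc, add_comm (f _)]

theorem ceil_le_sum_of_forall_eq_intCast {ι R : Type*} [Ring R] [LinearOrder R]
    [IsStrictOrderedRing R] [FloorRing R] {s : Finset ι} {y : ι → R} {a : R}
    (hy : ∀ k ∈ s, ∃ n : ℤ, y k = n) (ha : a ≤ ∑ k ∈ s, y k) :
    (⌈a⌉ : R) ≤ ∑ k ∈ s, y k := by
  choose! n hn using hy
  have hsum : ∑ k ∈ s, y k = ((∑ k ∈ s, n k : ℤ) : R) := by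
    push_cast
    exact sum_congr rfl hn
  rw [hsum] at ha ⊢
  exact_mod_cast Int.ceil_le.mpr ha

theorem prefix_setup_lower_bound_general (C : ℝ) (hC : 0 < C) (α β : ℤ)
    (d x u y : ℤ → ℝ)
    (hx0 : x (α - 1) = 0)
    (hdyn : ∀ k, α ≤ k → k ≤ β → x k = x (k - 1) - d k + u k)
    (hxnn : ∀ k, α - 1 ≤ k → k ≤ β → 0 ≤ x k)
    (hu : ∀ k, α ≤ k → k ≤ β → 0 ≤ u k ∧ u k ≤ C * y k)
    (hy : ∀ k, α ≤ k → k ≤ β → y k = 0 ∨ y k = 1) :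
    ∀ t, α ≤ t → t ≤ β →
      (⌈(∑ k ∈ Finset.Icc α t, d k) / C⌉ : ℝ) ≤ ∑ k ∈ Finset.Icc α t, y k := by
  intro t hαt htβ
  have hmem {k} (hk : k ∈ Icc α t) : α ≤ k ∧ k ≤ β := by
    rw [mem_Icc] at hk
    exact ⟨hk.1, hk.2.trans htβ⟩
  have hstock : x t = x (α - 1) + ∑ k ∈ Icc α t, (u k - d k) :=
    Int.eq_add_sum_Icc_of_forall_eq_add (by omega) fun k hk => by
      rw [hdyn k (hmem hk).1 (hmem hk).2]
      ring
  have hdemand : ∑ k ∈ Icc α t, d k ≤ ∑ k ∈ Icc α t, u k := by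
    have := hxnn t (by omega) htβ
    rw [hstock, hx0, sum_sub_distrib] at this
    linarith
  have hcapacity : ∑ k ∈ Icc α t, u k ≤ C * ∑ k ∈ Icc α t, y k := by
    rw [mul_sum]
    exact sum_le_sum fun k hk => (hu k (hmem hk).1 (hmem hk).2).2
  refine ceil_le_sum_of_forall_eq_intCast (fun k hk => ?_) ?_
  · rcases hy k (hmem hk).1 (hmem hk).2 with h | h
    · exact ⟨0, by simp [h]⟩
    · exact ⟨1, by simp [h]⟩
  · rw [div_le_iff₀' hC]
    linarith

/-- In the capacitated lot sizing dynamics over a regeneration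
interval, the number of setups over any prefix [α, t] is at least the ceiling
of the accumulated demand divided by the capacity. -/
theorem prefix_setup_lower_bound (C : ℝ) (hC : 0 < C) (α β : ℤ) (hαβ : α ≤ β)
    (d x u y : ℤ → ℝ)
    (hx0 : x (α - 1) = 0)
    (hdyn : ∀ k, α ≤ k → k ≤ β → x k = x (k - 1) - d k + u k)
    (hxnn : ∀ k, α - 1 ≤ k → k ≤ β → 0 ≤ x k)
    (hu : ∀ k, α ≤ k → k ≤ β → 0 ≤ u k ∧ u k ≤ C * y k)
    (hy : ∀ k, α ≤ k → k ≤ β → y k = 0 ∨ y k = 1) :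
    ∀ t, α ≤ t → t ≤ β →
      (⌈(∑ k ∈ Finset.Icc α t, d k) / C⌉ : ℝ) ≤ ∑ k ∈ Finset.Icc α t, y k :=
  prefix_setup_lower_bound_general C hC α β d x u y hx0 hdyn hxnn hu hy
end

section
/- Let N ≥ 1 be an integer, C > 0, and let d : {1,…,N} → ℝ with d(k) ≥ 0, and p, h, f : {1,…,N} → ℝ with p(k), h(k), f(k) ≥ 0. Consider the feasible set F of triples (x, u, y) with x : {0,…,N} → ℝ, u : {1,…,N} → ℝ, y : {1,…,N} → {0,1}, satisfying x(0) = 0, x(N) = 0, x(k) = x(k−1) − d(k) + u(k) and x(k) ≥ 0 for all k, and 0 ≤ u(k) ≤ C y(k) for all k, with cost J(x,u,y) = Σ_{k=1}^{N} ( p(k) u(k) + h(k) x(k) + f(k) y(k) ). If F is nonempty, then there exists (x*, u*, y*) ∈ F minimizing J over F with the following structure: for the decomposition 0 = t_0 < t_1 < … < t_m = N of x* into regeneration intervals (x*(t_j) = 0 and x*(k) > 0 for t_{j−1} < k < t_j), and for each j with D_j = Σ_{k=t_{j−1}+1}^{t_j} d(k) and residual r_j = D_j − ⌊D_j/C⌋·C,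 every order u*(k) with t_{j−1} < k ≤ t_j belongs to {0, C, r_j}, and at most one index k in each interval has u*(k) = r_j with 0 < r_j < C. -/
/-- Feasibility for the scalar capacitated lot sizing problem (MIPC_i):
dynamics x(k) = x(k−1) − d(k) + u(k) with nonnegative inventory, capacity
constraint 0 ≤ u(k) ≤ C y(k), binary setups, null initial and final state. -/
def LotFeas (N : ℕ) (C : ℝ) (d : ℕ → ℝ) (x u y : ℕ → ℝ) : Prop :=
  x 0 = 0 ∧ x N = 0 ∧
  (∀ k, 1 ≤ k → k ≤ N → x k = x (k - 1) - d k + u k) ∧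
  (∀ k, k ≤ N → 0 ≤ x k) ∧
  (∀ k, 1 ≤ k → k ≤ N → 0 ≤ u k ∧ u k ≤ C * y k) ∧
  (∀ k, 1 ≤ k → k ≤ N → y k = 0 ∨ y k = 1)

/-- Cost J(x,u,y) = Σ (p(k) u(k) + h(k) x(k) + f(k) y(k)). -/
def LotCost (N : ℕ) (p h f : ℕ → ℝ) (x u y : ℕ → ℝ) : ℝ :=
  ∑ k ∈ Finset.Icc 1 N, (p k * u k + h k * x k + f k * y k)

/-- Accumulated demand over the integer interval [a, b]. -/
def accD (d : ℕ → ℝ) (a b : ℕ) : ℝ := ∑ k ∈ Finset.Icc a b, d k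

/-- Residual demand r = D − ⌊D/C⌋·C. -/
noncomputable def resid (C D : ℝ) : ℝ := D - (⌊D / C⌋ : ℝ) * C

def Xf (d u : ℕ → ℝ) (k : ℕ) : ℝ := ∑ i ∈ Finset.Icc 1 k, (u i - d i)

noncomputable def indY (u : ℕ → ℝ) (k : ℕ) : ℝ := if u k = 0 then 0 else 1

noncomputable def Vset (N : ℕ) (C : ℝ) (d : ℕ → ℝ) : Finset ℝ :=
  insert 0 (insert C (((Finset.Icc 0 N) ×ˢ (Finset.Icc 0 N)).image
    (fun ab => resid C (accD d (ab.1 + 1) ab.2))))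

noncomputable def extW (N : ℕ) (w : Fin N → ℝ) (k : ℕ) : ℝ :=
  if hk : 1 ≤ k ∧ k ≤ N then w ⟨k - 1, by omega⟩ else 0

def GoodP (N : ℕ) (C : ℝ) (x u : ℕ → ℝ) : Prop :=
  ∀ k l, 1 ≤ k → k < l → l ≤ N → (∀ j, k ≤ j → j < l → 0 < x j) →
    (u k = 0 ∨ u k = C) ∨ (u l = 0 ∨ u l = C)

lemma tele (g : ℕ → ℝ) : ∀ b a, a ≤ b → ∑ k ∈ Finset.Icc (a+1) b, (g k - g (k-1)) = g b - g a := by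
  intro b
  induction b with
  | zero => intro a ha; interval_cases a; simp
  | succ n ih =>
    intro a ha
    rcases Nat.lt_or_ge a (n+1) with h | h
    · have h' : a ≤ n := by omega
      rw [Finset.sum_Icc_succ_top (by omega : a + 1 ≤ n + 1), ih a h']
      simp
    · have : a = n + 1 := by omega
      subst this
      simp

lemma sum_u_interval {N : ℕ} {C : ℝ} {d x u y : ℕ → ℝ}
    (hfeas : LotFeas N C d x u y) {a b : ℕ} (hab : a ≤ b) (hbN : b ≤ N)
    (hxa : x a = 0) (hxb : x b = 0) :
    ∑ k ∈ Finset.Icc (a+1) b, u k = accD d (a+1) b := by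
  obtain ⟨-, -, hrec, -, -, -⟩ := hfeas
  have key : ∑ k ∈ Finset.Icc (a+1) b, (x k - x (k-1)) = 0 := by
    rw [tele x b a hab, hxa, hxb]; ring
  have heq : ∑ k ∈ Finset.Icc (a+1) b, (x k - x (k-1)) =
      ∑ k ∈ Finset.Icc (a+1) b, (u k - d k) := by
    apply Finset.sum_congr rfl
    intro k hk
    rw [Finset.mem_Icc] at hk
    rw [hrec k (by omega) (by omega)]; ring
  rw [heq, Finset.sum_sub_distrib] at key
  have : ∑ k ∈ Finset.Icc (a+1) b, u k = ∑ k ∈ Finset.Icc (a+1) b, d k := by linarith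
  rw [this]; rfl

lemma structureOn {N : ℕ} {C : ℝ} (hC : 0 < C) {d x u y : ℕ → ℝ}
    (hfeas : LotFeas N C d x u y) (good : GoodP N C x u)
    {a b : ℕ} (hab : a < b) (hbN : b ≤ N) (hxa : x a = 0) (hxb : x b = 0)
    (hpos : ∀ j, a < j → j < b → 0 < x j) :
    (∀ k, a < k → k ≤ b → u k = 0 ∨ u k = C ∨ u k = resid C (accD d (a+1) b)) ∧
    (0 < resid C (accD d (a+1) b) → resid C (accD d (a+1) b) < C →
      ((Finset.Icc (a+1) b).filter
        (fun k => u k = resid C (accD d (a+1) b))).card ≤ 1) := by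
  classical
  obtain ⟨hx0, hxN, hrec, hxnn, hub, hy01⟩ := hfeas
  set S := Finset.Icc (a+1) b with hS
  have hbound : ∀ k ∈ S, 0 ≤ u k ∧ u k ≤ C := by
    intro k hk
    rw [hS, Finset.mem_Icc] at hk
    have h1 := hub k (by omega) (by omega)
    rcases hy01 k (by omega) (by omega) with hy | hy
    · constructor
      · exact h1.1
      · have : u k ≤ 0 := by have := h1.2; rw [hy] at this; linarith
        linarith
    · constructor
      · exact h1.1
      · have := h1.2; rw [hy] at this; linarith
  set F := S.filter (fun k => ¬(u k = 0 ∨ u k = C)) with hF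
  have hFcard : F.card ≤ 1 := by
    rw [Finset.card_le_one]
    intro k hk l hl
    rw [hF, Finset.mem_filter, hS, Finset.mem_Icc] at hk hl
    by_contra hne
    rcases lt_trichotomy k l with hkl | hkl | hkl
    · have := good k l (by omega) hkl (by omega)
        (fun j hj1 hj2 => hpos j (by omega) (by omega))
      tauto
    · exact hne hkl
    · have := good l k (by omega) hkl (by omega)
        (fun j hj1 hj2 => hpos j (by omega) (by omega))
      tauto
  have hsum : ∑ k ∈ S, u k = accD d (a+1) b :=
    sum_u_interval ⟨hx0, hxN, hrec, hxnn, hub, hy01⟩ (le_of_lt hab) hbN hxa hxb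
  set D := accD d (a+1) b with hD
  rcases Finset.eq_empty_or_nonempty F with hFe | hFne
  · -- all u are 0 or C
    have all01 : ∀ k ∈ S, u k = 0 ∨ u k = C := by
      intro k hk
      by_contra hcon
      have : k ∈ F := by rw [hF, Finset.mem_filter]; exact ⟨hk, hcon⟩
      rw [hFe] at this; exact absurd this (Finset.notMem_empty k)
    set n := (S.filter (fun k => u k = C)).card with hn
    have hDn : D = C * n := by
      rw [← hsum, ← Finset.sum_filter_add_sum_filter_not S (fun k => u k = C)]
      have h1 : ∑ k ∈ S.filter (fun k => u k = C), u k = C * n := by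
        rw [Finset.sum_congr rfl (fun k hk => (Finset.mem_filter.1 hk).2),
          Finset.sum_const, hn, nsmul_eq_mul, mul_comm]
      have h2 : ∑ k ∈ S.filter (fun k => ¬(u k = C)), u k = 0 := by
        apply Finset.sum_eq_zero
        intro k hk
        rw [Finset.mem_filter] at hk
        rcases all01 k hk.1 with h | h
        · exact h
        · exact absurd h hk.2
      rw [h1, h2, add_zero]
    have hresid : resid C D = 0 := by
      rw [resid, hDn]
      have : C * (n : ℝ) / C = (n : ℝ) := by field_simp
      rw [this, Int.floor_natCast]
      push_cast
      ring
    constructor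
    · intro k hk1 hk2
      rcases all01 k (by rw [hS, Finset.mem_Icc]; omega) with h | h
      · exact Or.inl h
      · exact Or.inr (Or.inl h)
    · intro hr1 _
      rw [hresid] at hr1
      linarith
  · -- exactly one fractional index k0
    have hFone : F.card = 1 := le_antisymm hFcard (Finset.card_pos.2 hFne)
    obtain ⟨k0, hk0⟩ := Finset.card_eq_one.1 hFone
    have hk0S : k0 ∈ S := by
      have : k0 ∈ F := by rw [hk0]; exact Finset.mem_singleton_self k0
      rw [hF, Finset.mem_filter] at this; exact this.1
    have hk0f : ¬(u k0 = 0 ∨ u k0 = C) := by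
      have : k0 ∈ F := by rw [hk0]; exact Finset.mem_singleton_self k0
      rw [hF, Finset.mem_filter] at this; exact this.2
    push_neg at hk0f
    have hv : 0 < u k0 ∧ u k0 < C := by
      have := hbound k0 hk0S
      constructor
      · rcases lt_or_eq_of_le this.1 with h | h
        · exact h
        · exact absurd h.symm hk0f.1
      · rcases lt_or_eq_of_le this.2 with h | h
        · exact h
        · exact absurd h hk0f.2
    have all01 : ∀ k ∈ S, k ≠ k0 → u k = 0 ∨ u k = C := by
      intro k hk hkne
      by_contra hcon
      have : k ∈ F := by rw [hF, Finset.mem_filter]; exact ⟨hk, hcon⟩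
      rw [hk0, Finset.mem_singleton] at this
      exact hkne this
    set n := ((S.erase k0).filter (fun k => u k = C)).card with hn
    have hDn : D = u k0 + C * n := by
      rw [← hsum, ← Finset.add_sum_erase S u hk0S]
      congr 1
      rw [← Finset.sum_filter_add_sum_filter_not (S.erase k0) (fun k => u k = C)]
      have h1 : ∑ k ∈ (S.erase k0).filter (fun k => u k = C), u k = C * n := by
        rw [Finset.sum_congr rfl (fun k hk => (Finset.mem_filter.1 hk).2),
          Finset.sum_const, hn, nsmul_eq_mul, mul_comm]
      have h2 : ∑ k ∈ (S.erase k0).filter (fun k => ¬(u k = C)), u k = 0 := by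
        apply Finset.sum_eq_zero
        intro k hk
        rw [Finset.mem_filter, Finset.mem_erase] at hk
        rcases all01 k hk.1.2 hk.1.1 with h | h
        · exact h
        · exact absurd h hk.2
      rw [h1, h2, add_zero]
    have hfloor : ⌊D / C⌋ = (n : ℤ) := by
      have h1 : (n : ℝ) ≤ D / C := by
        rw [le_div_iff₀ hC, hDn]; nlinarith [hv.1]
      have h2 : D / C < (n : ℝ) + 1 := by
        rw [div_lt_iff₀ hC, hDn]; nlinarith [hv.2]
      rw [Int.floor_eq_iff]
      constructor
      · exact_mod_cast h1
      · push_cast; exact h2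
    have hresid : resid C D = u k0 := by
      rw [resid, hfloor]
      push_cast
      rw [hDn]
      ring
    constructor
    · intro k hk1 hk2
      by_cases hkk : k = k0
      · subst hkk
        exact Or.inr (Or.inr hresid.symm)
      · rcases all01 k (by rw [hS, Finset.mem_Icc]; omega) hkk with h | h
        · exact Or.inl h
        · exact Or.inr (Or.inl h)
    · intro hr1 hr2
      have hsub : S.filter (fun k => u k = resid C D) ⊆ {k0} := by
        intro k hk
        rw [Finset.mem_filter] at hk
        rw [Finset.mem_singleton]
        by_contra hkne
        rcases all01 k hk.1 hkne with h | h
        · rw [h] at hk; exact absurd hk.2.symm (ne_of_gt hr1)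
        · rw [h] at hk; exact absurd hk.2.symm (ne_of_lt hr2)
      calc (S.filter (fun k => u k = resid C D)).card ≤ ({k0} : Finset ℕ).card :=
            Finset.card_le_card hsub
        _ = 1 := Finset.card_singleton k0

lemma perturb_feas {N : ℕ} {C : ℝ} {d x u y : ℕ → ℝ}
    (hfeas : LotFeas N C d x u y) {k l : ℕ} (hk : 1 ≤ k) (hkl : k < l) (hlN : l ≤ N)
    {e : ℝ}
    (hek1 : 0 ≤ u k + e) (hek2 : u k + e ≤ C * y k)
    (hel1 : 0 ≤ u l - e) (hel2 : u l - e ≤ C * y l)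
    (hxe : ∀ j, k ≤ j → j < l → 0 ≤ x j + e) :
    LotFeas N C d (fun j => if k ≤ j ∧ j < l then x j + e else x j)
      (fun j => if j = k then u k + e else if j = l then u l - e else u j) y := by
  obtain ⟨hx0, hxN, hrec, hxnn, hub, hy01⟩ := hfeas
  refine ⟨?_, ?_, ?_, ?_, ?_, hy01⟩
  · simp only
    rw [if_neg (by omega)]
    exact hx0
  · simp only
    rw [if_neg (by omega)]
    exact hxN
  · intro m h1 h2
    simp only
    by_cases hmk : m = k
    · subst hmk
      rw [if_pos (by omega : m ≤ m ∧ m < l), if_neg (by omega : ¬(m ≤ m - 1 ∧ m - 1 < l)),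
        if_pos rfl, hrec m h1 h2]
      ring
    · by_cases hml : m = l
      · subst hml
        rw [if_neg (by omega : ¬(k ≤ m ∧ m < m)), if_pos (by omega : k ≤ m - 1 ∧ m - 1 < m),
          if_neg hmk, if_pos rfl, hrec m h1 h2]
        ring
      · rw [if_neg hmk, if_neg hml]
        by_cases hc : k ≤ m ∧ m < l
        · rw [if_pos hc, if_pos (by omega : k ≤ m - 1 ∧ m - 1 < l), hrec m h1 h2]
          ring
        · rw [if_neg hc, if_neg (by omega : ¬(k ≤ m - 1 ∧ m - 1 < l)), hrec m h1 h2]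
  · intro j hj
    simp only
    by_cases hc : k ≤ j ∧ j < l
    · rw [if_pos hc]; exact hxe j hc.1 hc.2
    · rw [if_neg hc]; exact hxnn j hj
  · intro m h1 h2
    simp only
    by_cases hmk : m = k
    · subst hmk; rw [if_pos rfl]; exact ⟨hek1, hek2⟩
    · by_cases hml : m = l
      · subst hml; rw [if_neg hmk, if_pos rfl]; exact ⟨hel1, hel2⟩
      · rw [if_neg hmk, if_neg hml]; exact hub m h1 h2

lemma perturb_cost (N : ℕ) (p h f x u y : ℕ → ℝ) {k l : ℕ}
    (hk : 1 ≤ k) (hkl : k < l) (hlN : l ≤ N) (e : ℝ) :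
    LotCost N p h f (fun j => if k ≤ j ∧ j < l then x j + e else x j)
      (fun j => if j = k then u k + e else if j = l then u l - e else u j) y
    = LotCost N p h f x u y + e * (p k - p l + ∑ j ∈ Finset.Icc k (l-1), h j) := by
  classical
  unfold LotCost
  have split : ∀ j : ℕ,
      (p j * (if j = k then u k + e else if j = l then u l - e else u j)
        + h j * (if k ≤ j ∧ j < l then x j + e else x j) + f j * y j)
      = (p j * u j + h j * x j + f j * y j)
        + ((if j = k then p k * e else 0) + (if j = l then -(p l * e) else 0)
            + (if k ≤ j ∧ j < l then h j * e else 0)) := by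
    intro j
    by_cases hjk : j = k
    · subst hjk
      rw [if_pos rfl, if_neg (by omega : ¬ j = l), if_pos (by omega : j ≤ j ∧ j < l),
        if_pos rfl, if_pos (by omega : j ≤ j ∧ j < l)]
      ring
    · by_cases hjl : j = l
      · subst hjl
        rw [if_neg hjk, if_pos rfl, if_neg (by omega : ¬(k ≤ j ∧ j < j)), if_neg hjk,
          if_pos rfl, if_neg (by omega : ¬(k ≤ j ∧ j < j))]
        ring
      · rw [if_neg hjk, if_neg hjl, if_neg hjk, if_neg hjl]
        by_cases hc : k ≤ j ∧ j < l
        · rw [if_pos hc, if_pos hc]; ring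
        · rw [if_neg hc, if_neg hc]; ring
  rw [Finset.sum_congr rfl (fun j _ => split j), Finset.sum_add_distrib]
  congr 1
  have h1 : ∑ j ∈ Finset.Icc 1 N, (if j = k then p k * e else 0) = p k * e := by
    rw [Finset.sum_ite_eq' (Finset.Icc 1 N) k (fun _ => p k * e),
      if_pos (by rw [Finset.mem_Icc]; omega)]
  have h2 : ∑ j ∈ Finset.Icc 1 N, (if j = l then -(p l * e) else 0) = -(p l * e) := by
    rw [Finset.sum_ite_eq' (Finset.Icc 1 N) l (fun _ => -(p l * e)),
      if_pos (by rw [Finset.mem_Icc]; omega)]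
  have h3 : ∑ j ∈ Finset.Icc 1 N, (if k ≤ j ∧ j < l then h j * e else 0)
      = (∑ j ∈ Finset.Icc k (l-1), h j) * e := by
    rw [← Finset.sum_filter]
    have : (Finset.Icc 1 N).filter (fun j => k ≤ j ∧ j < l) = Finset.Icc k (l-1) := by
      ext j
      rw [Finset.mem_filter, Finset.mem_Icc, Finset.mem_Icc]
      omega
    rw [this, Finset.sum_mul]
  rw [Finset.sum_add_distrib, Finset.sum_add_distrib, h1, h2, h3]
  ring

open Classical in
noncomputable def measF (N : ℕ) (C : ℝ) (x u : ℕ → ℝ) : ℕ :=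
  ((Finset.Icc 1 N).filter (fun k => ¬(u k = 0 ∨ u k = C))).card +
  ((Finset.Icc 1 N).filter (fun k => 0 < x k)).card

lemma step_lemma {N : ℕ} {C : ℝ} (hC : 0 < C) {d : ℕ → ℝ} (p h f : ℕ → ℝ)
    {x u y : ℕ → ℝ} (hfeas : LotFeas N C d x u y) (hbad : ¬ GoodP N C x u) :
    ∃ x' u' y', LotFeas N C d x' u' y' ∧ measF N C x' u' < measF N C x u ∧
      LotCost N p h f x' u' y' ≤ LotCost N p h f x u y := by
  classical
  unfold GoodP at hbad
  push_neg at hbad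
  obtain ⟨k, l, hk1, hkl, hlN, hpos, hku, hlu⟩ := hbad
  obtain ⟨hx0, hxN, hrec, hxnn, hub, hy01⟩ := hfeas
  have hfeas : LotFeas N C d x u y := ⟨hx0, hxN, hrec, hxnn, hub, hy01⟩
  have hubk := hub k hk1 (by omega)
  have hubl := hub l (by omega) hlN
  have hyk : y k = 1 := by
    rcases hy01 k hk1 (by omega) with hy | hy
    · exfalso; rw [hy, mul_zero] at hubk; exact hku.1 (le_antisymm hubk.2 hubk.1)
    · exact hy
  have hyl : y l = 1 := by
    rcases hy01 l (by omega) hlN with hy | hy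
    · exfalso; rw [hy, mul_zero] at hubl; exact hlu.1 (le_antisymm hubl.2 hubl.1)
    · exact hy
  have hukC : u k < C := by
    have := hubk.2; rw [hyk, mul_one] at this
    exact lt_of_le_of_ne this hku.2
  have hulC : u l < C := by
    have := hubl.2; rw [hyl, mul_one] at this
    exact lt_of_le_of_ne this hlu.2
  have huk0 : 0 < u k := lt_of_le_of_ne hubk.1 (Ne.symm hku.1)
  have hul0 : 0 < u l := lt_of_le_of_ne hubl.1 (Ne.symm hlu.1)
  set s : ℝ := p k - p l + ∑ j ∈ Finset.Icc k (l-1), h j with hs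
  have hkmem : k ∈ (Finset.Icc 1 N).filter (fun j => ¬(u j = 0 ∨ u j = C)) := by
    rw [Finset.mem_filter, Finset.mem_Icc]
    exact ⟨⟨hk1, by omega⟩, by tauto⟩
  have hlmem : l ∈ (Finset.Icc 1 N).filter (fun j => ¬(u j = 0 ∨ u j = C)) := by
    rw [Finset.mem_filter, Finset.mem_Icc]
    exact ⟨⟨by omega, hlN⟩, by tauto⟩
  rcases le_or_gt s 0 with hsle | hsgt
  · -- increase u k, decrease u l
    set e : ℝ := min (C - u k) (u l) with he
    have he0 : 0 < e := lt_min (by linarith) hul0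
    have hek : e ≤ C - u k := min_le_left _ _
    have hel : e ≤ u l := min_le_right _ _
    set u2 : ℕ → ℝ := fun j => if j = k then u k + e else if j = l then u l - e else u j
      with hu2
    set x2 : ℕ → ℝ := fun j => if k ≤ j ∧ j < l then x j + e else x j with hx2
    refine ⟨x2, u2, y, perturb_feas hfeas hk1 hkl hlN
      (by linarith) (by rw [hyk, mul_one]; linarith)
      (by linarith) (by rw [hyl, mul_one]; linarith)
      (fun j hj1 hj2 => by have := hpos j hj1 hj2; linarith), ?_, ?_⟩
    · simp only [measF]
      have hfsub : (Finset.Icc 1 N).filter (fun j => ¬(u2 j = 0 ∨ u2 j = C))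
          ⊆ (Finset.Icc 1 N).filter (fun j => ¬(u j = 0 ∨ u j = C)) := by
        intro j hj
        rw [Finset.mem_filter] at hj ⊢
        refine ⟨hj.1, ?_⟩
        by_cases hjk : j = k
        · subst hjk; tauto
        · by_cases hjl : j = l
          · subst hjl; tauto
          · simp only [hu2, if_neg hjk, if_neg hjl] at hj; exact hj.2
      have hpsub : (Finset.Icc 1 N).filter (fun j => 0 < x2 j)
          ⊆ (Finset.Icc 1 N).filter (fun j => 0 < x j) := by
        intro j hj
        rw [Finset.mem_filter] at hj ⊢
        refine ⟨hj.1, ?_⟩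
        by_cases hc : k ≤ j ∧ j < l
        · exact hpos j hc.1 hc.2
        · simp only [hx2, if_neg hc] at hj; exact hj.2
      have hflt : ((Finset.Icc 1 N).filter (fun j => ¬(u2 j = 0 ∨ u2 j = C))).card
          < ((Finset.Icc 1 N).filter (fun j => ¬(u j = 0 ∨ u j = C))).card := by
        apply Finset.card_lt_card
        rw [Finset.ssubset_iff_of_subset hfsub]
        rcases min_cases (C - u k) (u l) with ⟨hemin, -⟩ | ⟨hemin, -⟩
        · refine ⟨k, hkmem, ?_⟩
          rw [Finset.mem_filter]
          intro hcon
          apply hcon.2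
          right
          simp only [hu2, if_pos, if_neg, ite_true, ite_false, if_true, if_false,
            eq_self_iff_true]
          rw [he.trans hemin]
          ring
        · refine ⟨l, hlmem, ?_⟩
          rw [Finset.mem_filter]
          intro hcon
          apply hcon.2
          left
          simp only [hu2, eq_self_iff_true, ite_true, if_true]
          rw [if_neg (by omega : ¬ l = k), he.trans hemin]
          ring
      have hple := Finset.card_le_card hpsub
      omega
    · have := perturb_cost N p h f x u y hk1 hkl hlN e
      rw [← hs] at this
      calc LotCost N p h f x2 u2 y = LotCost N p h f x u y + e * s := this
        _ ≤ LotCost N p h f x u y := by nlinarith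
  · -- decrease u k, increase u l
    have hIcc : (Finset.Icc k (l-1)).Nonempty := by
      rw [Finset.nonempty_Icc]; omega
    set m0 : ℝ := ((Finset.Icc k (l-1)).image x).min' (hIcc.image x) with hm0
    obtain ⟨j0, hj0mem, hj0⟩ := Finset.mem_image.1
      (((Finset.Icc k (l-1)).image x).min'_mem (hIcc.image x))
    rw [Finset.mem_Icc] at hj0mem
    have hj0' : x j0 = m0 := hj0.trans hm0.symm
    have hm0pos : 0 < m0 := by
      rw [← hj0']; exact hpos j0 hj0mem.1 (by omega)
    have hm0le : ∀ j, k ≤ j → j < l → m0 ≤ x j := by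
      intro j hj1 hj2
      exact Finset.min'_le _ _ (Finset.mem_image_of_mem x (Finset.mem_Icc.2 ⟨hj1, by omega⟩))
    set e : ℝ := min (min (u k) (C - u l)) m0 with he
    have he0 : 0 < e := lt_min (lt_min huk0 (by linarith)) hm0pos
    have hek : e ≤ u k := le_trans (min_le_left _ _) (min_le_left _ _)
    have hel : e ≤ C - u l := le_trans (min_le_left _ _) (min_le_right _ _)
    have hem : e ≤ m0 := min_le_right _ _
    set u2 : ℕ → ℝ := fun j => if j = k then u k + -e else if j = l then u l - -e else u j
      with hu2
    set x2 : ℕ → ℝ := fun j => if k ≤ j ∧ j < l then x j + -e else x j with hx2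
    refine ⟨x2, u2, y, perturb_feas hfeas hk1 hkl hlN
      (e := -e)
      (by linarith) (by rw [hyk, mul_one]; linarith)
      (by linarith) (by rw [hyl, mul_one]; linarith)
      (fun j hj1 hj2 => by have := hm0le j hj1 hj2; linarith), ?_, ?_⟩
    · simp only [measF]
      have hfsub : (Finset.Icc 1 N).filter (fun j => ¬(u2 j = 0 ∨ u2 j = C))
          ⊆ (Finset.Icc 1 N).filter (fun j => ¬(u j = 0 ∨ u j = C)) := by
        intro j hj
        rw [Finset.mem_filter] at hj ⊢
        refine ⟨hj.1, ?_⟩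
        by_cases hjk : j = k
        · subst hjk; tauto
        · by_cases hjl : j = l
          · subst hjl; tauto
          · simp only [hu2, if_neg hjk, if_neg hjl] at hj; exact hj.2
      have hpsub : (Finset.Icc 1 N).filter (fun j => 0 < x2 j)
          ⊆ (Finset.Icc 1 N).filter (fun j => 0 < x j) := by
        intro j hj
        rw [Finset.mem_filter] at hj ⊢
        refine ⟨hj.1, ?_⟩
        by_cases hc : k ≤ j ∧ j < l
        · exact hpos j hc.1 hc.2
        · simp only [hx2, if_neg hc] at hj; exact hj.2
      rcases min_cases (min (u k) (C - u l)) m0 with ⟨hemin, -⟩ | ⟨hemin, -⟩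
      · have hflt : ((Finset.Icc 1 N).filter (fun j => ¬(u2 j = 0 ∨ u2 j = C))).card
            < ((Finset.Icc 1 N).filter (fun j => ¬(u j = 0 ∨ u j = C))).card := by
          apply Finset.card_lt_card
          rw [Finset.ssubset_iff_of_subset hfsub]
          rcases min_cases (u k) (C - u l) with ⟨hemin2, -⟩ | ⟨hemin2, -⟩
          · refine ⟨k, hkmem, ?_⟩
            rw [Finset.mem_filter]
            intro hcon
            apply hcon.2
            left
            simp only [hu2, eq_self_iff_true, ite_true, if_true]
            rw [he.trans (hemin.trans hemin2)]
            ring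
          · refine ⟨l, hlmem, ?_⟩
            rw [Finset.mem_filter]
            intro hcon
            apply hcon.2
            right
            simp only [hu2, eq_self_iff_true, ite_true, if_true]
            rw [if_neg (by omega : ¬ l = k), he.trans (hemin.trans hemin2)]
            ring
        have hple := Finset.card_le_card hpsub
        omega
      · have hplt : ((Finset.Icc 1 N).filter (fun j => 0 < x2 j)).card
            < ((Finset.Icc 1 N).filter (fun j => 0 < x j)).card := by
          apply Finset.card_lt_card
          rw [Finset.ssubset_iff_of_subset hpsub]
          refine ⟨j0, ?_, ?_⟩
          · rw [Finset.mem_filter, Finset.mem_Icc]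
            exact ⟨⟨by omega, by omega⟩, hpos j0 hj0mem.1 (by omega)⟩
          · rw [Finset.mem_filter]
            intro hcon
            have h2 := hcon.2
            simp only [hx2] at h2
            rw [if_pos (by omega : k ≤ j0 ∧ j0 < l), he.trans hemin, hj0'] at h2
            linarith
        have hfle := Finset.card_le_card hfsub
        omega
    · have := perturb_cost N p h f x u y hk1 hkl hlN (-e)
      rw [← hs] at this
      calc LotCost N p h f x2 u2 y = LotCost N p h f x u y + (-e) * s := this
        _ ≤ LotCost N p h f x u y := by nlinarith

lemma exchange {N : ℕ} {C : ℝ} (hC : 0 < C) {d : ℕ → ℝ} (p h f : ℕ → ℝ) :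
    ∀ n (x u y : ℕ → ℝ), LotFeas N C d x u y → measF N C x u ≤ n →
    ∃ x' u' y', LotFeas N C d x' u' y' ∧ GoodP N C x' u' ∧
      LotCost N p h f x' u' y' ≤ LotCost N p h f x u y := by
  intro n
  induction n with
  | zero =>
    intro x u y hfeas hm
    by_cases hgood : GoodP N C x u
    · exact ⟨x, u, y, hfeas, hgood, le_refl _⟩
    · obtain ⟨x', u', y', _, hlt, _⟩ := step_lemma hC p h f hfeas hgood
      omega
  | succ n ih =>
    intro x u y hfeas hm
    by_cases hgood : GoodP N C x u
    · exact ⟨x, u, y, hfeas, hgood, le_refl _⟩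
    · obtain ⟨x', u', y', hfeas', hlt, hcost⟩ := step_lemma hC p h f hfeas hgood
      obtain ⟨x'', u'', y'', hfeas'', hgood'', hcost''⟩ :=
        ih x' u' y' hfeas' (by omega)
      exact ⟨x'', u'', y'', hfeas'', hgood'', le_trans hcost'' hcost⟩

lemma feas_x {N : ℕ} {C : ℝ} {d x u y : ℕ → ℝ} (hfeas : LotFeas N C d x u y) :
    ∀ k, k ≤ N → x k = Xf d u k := by
  obtain ⟨hx0, -, hrec, -, -, -⟩ := hfeas
  intro k
  induction k with
  | zero => intro _; simpa [Xf] using hx0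
  | succ n ih =>
    intro hn
    have h1 : Xf d u (n+1) = Xf d u n + (u (n+1) - d (n+1)) :=
      Finset.sum_Icc_succ_top (by omega) _
    rw [hrec (n+1) (by omega) hn]
    simp only [Nat.add_sub_cancel]
    rw [ih (by omega), h1]
    ring

lemma canon {N : ℕ} {C : ℝ} {d x u y : ℕ → ℝ} (p h f : ℕ → ℝ)
    (hf : ∀ k, 1 ≤ k → k ≤ N → 0 ≤ f k)
    (hfeas : LotFeas N C d x u y)
    (u' : ℕ → ℝ) (hagree : ∀ k, 1 ≤ k → k ≤ N → u' k = u k) :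
    LotFeas N C d (Xf d u') u' (indY u') ∧
    LotCost N p h f (Xf d u') u' (indY u') ≤ LotCost N p h f x u y := by
  classical
  have hXag : ∀ k, k ≤ N → Xf d u' k = Xf d u k := by
    intro k hk
    unfold Xf
    apply Finset.sum_congr rfl
    intro i hi
    rw [Finset.mem_Icc] at hi
    rw [hagree i hi.1 (by omega)]
  have hXx : ∀ k, k ≤ N → Xf d u' k = x k := by
    intro k hk
    rw [hXag k hk, ← feas_x hfeas k hk]
  obtain ⟨hx0, hxN, hrec, hxnn, hub, hy01⟩ := hfeas
  have hfeas : LotFeas N C d x u y := ⟨hx0, hxN, hrec, hxnn, hub, hy01⟩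
  have hy1 : ∀ k, 1 ≤ k → k ≤ N → u k ≠ 0 → y k = 1 := by
    intro k h1 h2 hu
    rcases hy01 k h1 h2 with hy | hy
    · exfalso
      have := (hub k h1 h2)
      rw [hy, mul_zero] at this
      exact hu (le_antisymm this.2 this.1)
    · exact hy
  constructor
  · refine ⟨by simp [Xf], ?_, ?_, ?_, ?_, ?_⟩
    · rw [hXx N le_rfl]; exact hxN
    · intro k h1 h2
      have hk : k - 1 + 1 = k := by omega
      have h3 : Xf d u' (k-1+1) = Xf d u' (k-1) + (u' (k-1+1) - d (k-1+1)) :=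
        Finset.sum_Icc_succ_top (by omega) _
      rw [hk] at h3
      rw [h3]; ring
    · intro k hk; rw [hXx k hk]; exact hxnn k hk
    · intro k h1 h2
      rw [hagree k h1 h2]
      have hb := hub k h1 h2
      by_cases hu : u k = 0
      · rw [hu]
        unfold indY
        rw [hagree k h1 h2, if_pos hu, mul_zero]
        exact ⟨le_rfl, le_rfl⟩
      · unfold indY
        rw [hagree k h1 h2, if_neg hu, mul_one]
        have := hy1 k h1 h2 hu
        rw [this, mul_one] at hb
        exact hb
    · intro k _ _
      unfold indY
      by_cases hu : u' k = 0
      · rw [if_pos hu]; left; rfl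
      · rw [if_neg hu]; right; rfl
  · unfold LotCost
    apply Finset.sum_le_sum
    intro k hk
    rw [Finset.mem_Icc] at hk
    rw [hagree k hk.1 hk.2, hXx k hk.2]
    have hfk := hf k hk.1 hk.2
    have hterm : f k * indY u' k ≤ f k * y k := by
      unfold indY
      rw [hagree k hk.1 hk.2]
      by_cases hu : u k = 0
      · rw [if_pos hu, mul_zero]
        rcases hy01 k hk.1 hk.2 with hy | hy <;> rw [hy] <;> nlinarith
      · rw [if_neg hu, hy1 k hk.1 hk.2 hu]
    linarith

lemma good_values {N : ℕ} {C : ℝ} (hC : 0 < C) {d x u y : ℕ → ℝ}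
    (hfeas : LotFeas N C d x u y) (hgood : GoodP N C x u) :
    ∀ k, 1 ≤ k → k ≤ N → u k ∈ Vset N C d := by
  classical
  intro k h1 h2
  by_cases h0 : u k = 0
  · rw [h0]; exact Finset.mem_insert_self 0 _
  by_cases hCk : u k = C
  · rw [hCk]
    exact Finset.mem_insert_of_mem (Finset.mem_insert_self C _)
  obtain ⟨hx0, hxN, hrec, hxnn, hub, hy01⟩ := hfeas
  have hfeas : LotFeas N C d x u y := ⟨hx0, hxN, hrec, hxnn, hub, hy01⟩
  set Z := (Finset.range k).filter (fun j => x j = 0) with hZ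
  have h0Z : 0 ∈ Z := by
    rw [hZ, Finset.mem_filter, Finset.mem_range]; exact ⟨by omega, hx0⟩
  set a := Z.max' ⟨0, h0Z⟩ with ha
  have haZ : a ∈ Z := Z.max'_mem _
  rw [hZ, Finset.mem_filter, Finset.mem_range] at haZ
  have hamax : ∀ j, j < k → x j = 0 → j ≤ a := by
    intro j hj hxj
    exact Finset.le_max' Z j (by rw [hZ, Finset.mem_filter, Finset.mem_range]; exact ⟨hj, hxj⟩)
  set W := (Finset.Icc k N).filter (fun j => x j = 0) with hW
  have hNW : N ∈ W := by
    rw [hW, Finset.mem_filter, Finset.mem_Icc]; exact ⟨⟨h2, le_rfl⟩, hxN⟩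
  set b := W.min' ⟨N, hNW⟩ with hb
  have hbW : b ∈ W := W.min'_mem _
  rw [hW, Finset.mem_filter, Finset.mem_Icc] at hbW
  have hbmin : ∀ j, k ≤ j → j ≤ N → x j = 0 → b ≤ j := by
    intro j hj1 hj2 hxj
    exact Finset.min'_le W j
      (by rw [hW, Finset.mem_filter, Finset.mem_Icc]; exact ⟨⟨hj1, hj2⟩, hxj⟩)
  have hab : a < b := by omega
  have hpos : ∀ j, a < j → j < b → 0 < x j := by
    intro j hj1 hj2
    have hjN : j ≤ N := by omega
    rcases (hxnn j hjN).lt_or_eq with hlt | heq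
    · exact hlt
    · exfalso
      rcases lt_or_ge j k with hjk | hjk
      · have := hamax j hjk heq.symm; omega
      · have := hbmin j hjk hjN heq.symm; omega
  obtain ⟨hstruct, -⟩ := structureOn hC hfeas hgood hab hbW.1.2 haZ.2 hbW.2 hpos
  rcases hstruct k (by omega) (by omega) with hcase | hcase | hcase
  · exact absurd hcase h0
  · exact absurd hcase hCk
  · rw [hcase]
    apply Finset.mem_insert_of_mem
    apply Finset.mem_insert_of_mem
    apply Finset.mem_image.2
    exact ⟨(a, b), Finset.mem_product.2
      ⟨Finset.mem_Icc.2 ⟨by omega, by omega⟩, Finset.mem_Icc.2 ⟨by omega, by omega⟩⟩, rfl⟩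

/-- Pochet–Wolsey structural result: some optimal solution of
the capacitated lot sizing problem orders, within each regeneration interval
of its decomposition, only full batches of size C except at most one partial
batch of size equal to the residual demand r of the interval. -/
theorem exists_optimal_batch_structure (N : ℕ) (hN : 1 ≤ N)
    (C : ℝ) (hC : 0 < C) (d p h f : ℕ → ℝ)
    (hd : ∀ k, 1 ≤ k → k ≤ N → 0 ≤ d k)
    (hp : ∀ k, 1 ≤ k → k ≤ N → 0 ≤ p k)
    (hh : ∀ k, 1 ≤ k → k ≤ N → 0 ≤ h k)
    (hf : ∀ k, 1 ≤ k → k ≤ N → 0 ≤ f k)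
    (hne : ∃ x u y, LotFeas N C d x u y) :
    ∃ x u y, LotFeas N C d x u y ∧
      (∀ x' u' y', LotFeas N C d x' u' y' →
        LotCost N p h f x u y ≤ LotCost N p h f x' u' y') ∧
      (∀ (m : ℕ) (t : ℕ → ℕ),
        1 ≤ m → t 0 = 0 → t m = N → (∀ j < m, t j < t (j + 1)) →
        (∀ j ≤ m, x (t j) = 0) →
        (∀ j, 1 ≤ j → j ≤ m → ∀ k, t (j - 1) < k → k < t j → 0 < x k) →
        ∀ j, 1 ≤ j → j ≤ m →
          (∀ k, t (j - 1) < k → k ≤ t j →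
            u k = 0 ∨ u k = C ∨
              u k = resid C (accD d (t (j - 1) + 1) (t j))) ∧
          (0 < resid C (accD d (t (j - 1) + 1) (t j)) →
            resid C (accD d (t (j - 1) + 1) (t j)) < C →
            ((Finset.Icc (t (j - 1) + 1) (t j)).filter
              (fun k => u k = resid C (accD d (t (j - 1) + 1) (t j)))).card ≤ 1)) := by
  classical
  obtain ⟨x0, u0, y0, hfeas0⟩ := hne
  obtain ⟨x1, u1, y1, hfeas1, hgood1, -⟩ :=
    exchange hC p h f (measF N C x0 u0) x0 u0 y0 hfeas0 le_rfl
  set P : Finset (Fin N → ℝ) := (Fintype.piFinset fun _ : Fin N => Vset N C d).filter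
    (fun w => LotFeas N C d (Xf d (extW N w)) (extW N w) (indY (extW N w))) with hP
  have hext : ∀ u' : ℕ → ℝ, ∀ k, 1 ≤ k → k ≤ N →
      extW N (fun i => u' (i.1 + 1)) k = u' k := by
    intro u' k h1 h2
    unfold extW
    rw [dif_pos ⟨h1, h2⟩]
    show u' (k - 1 + 1) = u' k
    congr 1
    omega
  have hmemP : ∀ x' u' y', LotFeas N C d x' u' y' → GoodP N C x' u' →
      (fun i : Fin N => u' (i.1 + 1)) ∈ P := by
    intro x' u' y' hfeas' hgood'
    rw [hP, Finset.mem_filter, Fintype.mem_piFinset]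
    constructor
    · intro i
      exact good_values hC hfeas' hgood' (i.1 + 1) (by omega) i.isLt
    · exact (canon p h f hf hfeas' _ (hext u')).1
  have hPne : P.Nonempty := ⟨_, hmemP x1 u1 y1 hfeas1 hgood1⟩
  obtain ⟨w, hwP, hwmin⟩ := Finset.exists_min_image P
    (fun w => LotCost N p h f (Xf d (extW N w)) (extW N w) (indY (extW N w))) hPne
  have hfeas2 : LotFeas N C d (Xf d (extW N w)) (extW N w) (indY (extW N w)) := by
    rw [hP] at hwP; exact (Finset.mem_filter.1 hwP).2
  have hopt2 : ∀ x' u' y', LotFeas N C d x' u' y' →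
      LotCost N p h f (Xf d (extW N w)) (extW N w) (indY (extW N w))
        ≤ LotCost N p h f x' u' y' := by
    intro x' u' y' hfeas'
    obtain ⟨xg, ug, yg, hfeasg, hgoodg, hcostg⟩ :=
      exchange hC p h f (measF N C x' u') x' u' y' hfeas' le_rfl
    have hmem := hmemP xg ug yg hfeasg hgoodg
    have h1 := hwmin _ hmem
    have h2 := (canon p h f hf hfeasg _ (hext ug)).2
    exact le_trans h1 (le_trans h2 hcostg)
  obtain ⟨xs, us, ys, hfeasS, hgoodS, hcostS⟩ :=
    exchange hC p h f (measF N C (Xf d (extW N w)) (extW N w)) _ _ _ hfeas2 le_rfl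
  refine ⟨xs, us, ys, hfeasS, ?_, ?_⟩
  · intro x' u' y' hfeas'
    exact le_trans hcostS (hopt2 x' u' y' hfeas')
  · intro m t hm ht0 htm hinc hzero hposd j hj1 hjm
    have hmono : ∀ i j', i ≤ j' → j' ≤ m → t i ≤ t j' := by
      intro i j'
      induction j' with
      | zero =>
        intro hij _
        have : i = 0 := by omega
        rw [this]
      | succ n ih =>
        intro hij hj'
        rcases Nat.eq_or_lt_of_le hij with heq | hlt
        · rw [heq]
        · have ha1 := hinc n (by omega)
          have ha2 := ih (by omega) (by omega)
          omega
    have hab : t (j - 1) < t j := by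
      have := hinc (j - 1) (by omega)
      rwa [show j - 1 + 1 = j by omega] at this
    have hbN : t j ≤ N := by
      have hle := hmono j m hjm le_rfl
      rw [htm] at hle
      exact hle
    exact structureOn hC hfeasS hgoodS hab hbN (hzero (j - 1) (by omega)) (hzero j hjm)
      (hposd j hj1 hjm)
end
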